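/- arXiv:1205.6504 — 5 statements merged into one kernel-verified Lean document; each statement's English description precedes it below -/
import Mathlib

section
/- For δ_1 > δ_2 > 0, ∫_{-∞}^{∞} |erf(z/δ_1) - erf(z/δ2)| dz = (2/√π)(δ_1 - δ_2). -/
/-! `z * erf (z / δ) + δ / √π * exp (-(z / δ) ^ 2)` is a primitive of `erf (z / δ)`. The integrand
is even, so the integral is twice the one over `(0, ∞)`, where `erf (z / δ₂) ≥ erf (z / δ₁)`. There
it is the limit at `∞` of the difference of primitives, which is `0` by Gaussian decay, minus the
value `(δ₂ - δ₁) / √π` of that difference at `0`. -/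

open MeasureTheory Real

noncomputable def erf (ζ : ℝ) : ℝ := (2 / Real.sqrt Real.pi) * ∫ χ in (0:ℝ)..ζ, Real.exp (-χ^2)

open Filter Set Topology

lemma continuous_exp_neg_sq : Continuous fun χ : ℝ => exp (-χ ^ 2) := by
  fun_prop

lemma hasDerivAt_erf (x : ℝ) : HasDerivAt erf (2 / √π * exp (-x ^ 2)) x :=
  (intervalIntegral.integral_hasDerivAt_right (continuous_exp_neg_sq.intervalIntegrable _ _)
    (continuous_exp_neg_sq.stronglyMeasurableAtFilter _ _)
    continuous_exp_neg_sq.continuousAt).const_mul _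

lemma erf_sub_erf (a b : ℝ) : erf b - erf a = 2 / √π * ∫ χ in a..b, exp (-χ ^ 2) := by
  rw [erf, erf, ← mul_sub, intervalIntegral.integral_interval_sub_left
    (continuous_exp_neg_sq.intervalIntegrable _ _) (continuous_exp_neg_sq.intervalIntegrable _ _)]

lemma erf_neg (x : ℝ) : erf (-x) = -erf x := by
  have h := intervalIntegral.integral_comp_neg (a := 0) (b := x) fun χ : ℝ => exp (-χ ^ 2)
  simp only [neg_sq, neg_zero] at h
  rw [erf, erf, intervalIntegral.integral_symm (-x) 0, ← h]
  ring

lemma monotone_erf : Monotone erf := fun a b hab => by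
  have h : 0 ≤ 2 / √π * ∫ χ in a..b, exp (-χ ^ 2) :=
    mul_nonneg (by positivity) (intervalIntegral.integral_nonneg hab fun _ _ => (exp_pos _).le)
  linarith [erf_sub_erf a b]

lemma erf_sub_erf_le {a b : ℝ} (ha : 0 ≤ a) (hab : a ≤ b) :
    erf b - erf a ≤ 2 / √π * (exp (-a ^ 2) * (b - a)) := by
  have h : ∫ χ in a..b, exp (-χ ^ 2) ≤ ∫ _ in a..b, exp (-a ^ 2) :=
    intervalIntegral.integral_mono_on hab (continuous_exp_neg_sq.intervalIntegrable _ _)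
      intervalIntegrable_const fun x hx => by
        have : a ^ 2 ≤ x ^ 2 := pow_le_pow_left₀ ha hx.1 2
        gcongr
  rw [erf_sub_erf]
  rw [intervalIntegral.integral_const, smul_eq_mul, mul_comm] at h
  gcongr

lemma erf_div_le_erf_div {z δ₁ δ₂ : ℝ} (hz : 0 ≤ z) (hδ₂ : 0 < δ₂) (hδ : δ₂ ≤ δ₁) :
    erf (z / δ₁) ≤ erf (z / δ₂) :=
  monotone_erf (div_le_div_of_nonneg_left hz hδ₂ hδ)

lemma tendsto_exp_neg_div_sq_atTop {δ : ℝ} (hδ : 0 < δ) :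
    Tendsto (fun z => exp (-(z / δ) ^ 2)) atTop (𝓝 0) :=
  tendsto_exp_atBot.comp <| tendsto_neg_atBot_iff.mpr <|
    (tendsto_pow_atTop two_ne_zero).comp (tendsto_id.atTop_div_const hδ)

lemma tendsto_sq_mul_exp_neg_div_sq_atTop {δ : ℝ} (hδ : 0 < δ) :
    Tendsto (fun z => z ^ 2 * exp (-(z / δ) ^ 2)) atTop (𝓝 0) := by
  have h := ((tendsto_pow_mul_exp_neg_atTop_nhds_zero 1).comp
    ((tendsto_pow_atTop two_ne_zero).comp (tendsto_id.atTop_div_const hδ))).const_mul (δ ^ 2)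
  rw [mul_zero] at h
  refine h.congr fun z => ?_
  simp only [Function.comp_apply, id, pow_one]
  field_simp

lemma tendsto_mul_erf_div_sub_erf_div_atTop {δ₁ δ₂ : ℝ} (hδ₂ : 0 < δ₂) (hδ : δ₂ ≤ δ₁) :
    Tendsto (fun z => z * (erf (z / δ₂) - erf (z / δ₁))) atTop (𝓝 0) := by
  have hδ₁ := hδ₂.trans_le hδ
  have hbound := (tendsto_sq_mul_exp_neg_div_sq_atTop hδ₁).const_mul (2 / √π * (1 / δ₂ - 1 / δ₁))
  rw [mul_zero] at hbound
  refine squeeze_zero' ?_ ?_ hbound <;> filter_upwards [eventually_ge_atTop 0] with z hz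
  · exact mul_nonneg hz (sub_nonneg.mpr (erf_div_le_erf_div hz hδ₂ hδ))
  · calc z * (erf (z / δ₂) - erf (z / δ₁))
        ≤ z * (2 / √π * (exp (-(z / δ₁) ^ 2) * (z / δ₂ - z / δ₁))) := by
          gcongr
          exact erf_sub_erf_le (by positivity) (div_le_div_of_nonneg_left hz hδ₂ hδ)
      _ = 2 / √π * (1 / δ₂ - 1 / δ₁) * (z ^ 2 * exp (-(z / δ₁) ^ 2)) := by ring

noncomputable def erfDivPrimitive (δ z : ℝ) : ℝ := z * erf (z / δ) + δ / √π * exp (-(z / δ) ^ 2)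

lemma hasDerivAt_erfDivPrimitive {δ : ℝ} (hδ : δ ≠ 0) (x : ℝ) :
    HasDerivAt (erfDivPrimitive δ) (erf (x / δ)) x := by
  have hdiv : HasDerivAt (fun z : ℝ => z / δ) (1 / δ) x := by
    simpa using (hasDerivAt_id x).div_const δ
  have herf : HasDerivAt (fun z => erf (z / δ)) (2 / √π * exp (-(x / δ) ^ 2) * (1 / δ)) x :=
    (hasDerivAt_erf _).comp x hdiv
  have hexp : HasDerivAt (fun z => exp (-(z / δ) ^ 2))
      (exp (-(x / δ) ^ 2) * -(2 * (x / δ) ^ 1 * (1 / δ))) x :=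
    (hdiv.pow 2).neg.exp
  refine (((hasDerivAt_id' x).mul herf).add (hexp.const_mul (δ / √π))).congr_deriv ?_
  field_simp
  ring

lemma erfDivPrimitive_zero (δ : ℝ) : erfDivPrimitive δ 0 = δ / √π := by
  simp [erfDivPrimitive]

lemma integral_Ioi_erf_div_sub_erf_div {δ₁ δ₂ : ℝ} (hδ₂ : 0 < δ₂) (hδ : δ₂ ≤ δ₁) :
    ∫ z in Ioi 0, (erf (z / δ₂) - erf (z / δ₁)) = (δ₁ - δ₂) / √π := by
  have hδ₁ := hδ₂.trans_le hδ
  set g := fun z => erfDivPrimitive δ₂ z - erfDivPrimitive δ₁ z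
  have hg : ∀ x, HasDerivAt g (erf (x / δ₂) - erf (x / δ₁)) x := fun x =>
    (hasDerivAt_erfDivPrimitive hδ₂.ne' x).sub (hasDerivAt_erfDivPrimitive hδ₁.ne' x)
  have hg_atTop : Tendsto g atTop (𝓝 0) := by
    have h := ((tendsto_mul_erf_div_sub_erf_div_atTop hδ₂ hδ).add
      ((tendsto_exp_neg_div_sq_atTop hδ₂).const_mul (δ₂ / √π))).sub
      ((tendsto_exp_neg_div_sq_atTop hδ₁).const_mul (δ₁ / √π))
    simp only [mul_zero, add_zero, sub_zero] at h
    refine h.congr fun z => ?_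
    simp only [g, erfDivPrimitive]
    ring
  rw [integral_Ioi_of_hasDerivAt_of_nonneg (hg 0).continuousAt.continuousWithinAt
    (fun x _ => hg x) (fun x hx => sub_nonneg.mpr (erf_div_le_erf_div hx.le hδ₂ hδ))
    hg_atTop]
  simp only [g, erfDivPrimitive_zero]
  ring

theorem stmt5 (δ1 δ2 : ℝ) (hδ2 : 0 < δ2) (hδ : δ2 < δ1) :
    ∫ z : ℝ, |erf (z/δ1) - erf (z/δ2)| = (2 / Real.sqrt Real.pi) * (δ1 - δ2) := by
  have h_even : ∀ z, |erf (z / δ1) - erf (z / δ2)| = |erf (|z| / δ1) - erf (|z| / δ2)| := by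
    intro z
    rcases abs_cases z with ⟨hz, -⟩ | ⟨hz, -⟩
    · rw [hz]
    · rw [hz, neg_div, neg_div, erf_neg, erf_neg, ← abs_neg]
      ring_nf
  have h_Ioi : ∫ z in Ioi 0, |erf (z / δ1) - erf (z / δ2)| = (δ1 - δ2) / √π := by
    rw [← integral_Ioi_erf_div_sub_erf_div hδ2 hδ.le]
    refine setIntegral_congr_fun measurableSet_Ioi fun z hz => ?_
    rw [abs_sub_comm, abs_of_nonneg (sub_nonneg.mpr (erf_div_le_erf_div hz.le hδ2 hδ.le))]
  rw [funext h_even, integral_comp_abs (f := fun z => |erf (z / δ1) - erf (z / δ2)|), h_Ioi]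
  ring
end

section
/- Let S : ℝ → ℝ be bounded with S(χ) → -1 as χ → -∞ and S(χ) → 1 as χ → +∞, and suppose for every ratio ρ > 1 the function χ ↦ |S(χ) - S(ρχ)| is integrable on ℝ. Define u_h(z) = (u_L+u_R)/2 + ((u_R-u_L)/2) S(z / (κ h^p t_f)^{1/(p+1)}) with constants κ, t_f > 0, p ≥ 1, u_L ≠ u_R. Then for h_1 > h_2 > 0, ||u_{h_1} - u_{h_2}||_{L^1(ℝ)} = |u_R - u_L| · (κ h_1^p t_f)^{1/(p+1)} · (1/2) ∫_ℝ |S(χ) - S(χ (h_1/h_2)^{p/(p+1)})| dχ. -/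
open MeasureTheory Real Filter

theorem stmt8 (S : ℝ → ℝ) (hSb : ∃ M, ∀ χ, |S χ| ≤ M)
    (hSm : Tendsto S atBot (nhds (-1)))
    (hSp : Tendsto S atTop (nhds 1))
    (hSint : ∀ ρ : ℝ, 1 < ρ → Integrable (fun χ => |S χ - S (ρ * χ)|))
    (κ tf p uL uR : ℝ) (hκ : 0 < κ) (htf : 0 < tf) (hp : 1 ≤ p) (hLR : uL ≠ uR)
    (u : ℝ → ℝ → ℝ)
    (hu : ∀ h z, u h z = (uL + uR)/2 + (uR - uL)/2 * S (z / (κ * h ^ p * tf) ^ (1/(p+1))))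
    (h1 h2 : ℝ) (h2p : 0 < h2) (h12 : h2 < h1) :
    ∫ z : ℝ, |u h1 z - u h2 z| =
      |uR - uL| * (κ * h1 ^ p * tf) ^ (1/(p+1)) *
        ((1/2) * ∫ χ : ℝ, |S χ - S (χ * (h1/h2) ^ (p/(p+1)))|) := by
  have h1p : 0 < h1 := h2p.trans h12
  have hbase1 : 0 < κ * h1 ^ p * tf := by positivity
  have hbase2 : 0 < κ * h2 ^ p * tf := by positivity
  set a : ℝ := (κ * h1 ^ p * tf) ^ (1/(p+1)) with ha
  set b : ℝ := (κ * h2 ^ p * tf) ^ (1/(p+1)) with hb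
  have hapos : 0 < a := rpow_pos_of_pos hbase1 _
  have hbpos : 0 < b := rpow_pos_of_pos hbase2 _
  set ρ : ℝ := (h1/h2) ^ (p/(p+1)) with hρdef
  have hr : 1 < h1 / h2 := (one_lt_div h2p).2 h12
  have hpe : 0 < p / (p+1) := by positivity
  have hρ : 1 < ρ := one_lt_rpow hr hpe
  have hab : a = ρ * b := by
    have e1 : ρ = ((h1/h2) ^ p) ^ (1/(p+1)) := by
      rw [hρdef, show p/(p+1) = p * (1/(p+1)) by ring,
        rpow_mul (by positivity : (0:ℝ) ≤ h1/h2)]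
    have e2 : (h1/h2)^p * (κ * h2^p * tf) = κ * h1^p * tf := by
      rw [div_rpow h1p.le h2p.le]
      field_simp
    rw [e1, hb, ← mul_rpow (by positivity) hbase2.le, e2]
  -- pointwise identity
  have hpt : ∀ z : ℝ, |u h1 z - u h2 z| = |uR - uL|/2 * |S (z/a) - S (ρ * (z/a))| := by
    intro z
    have hzb : z / b = ρ * (z / a) := by
      rw [hab]
      field_simp
    rw [hu h1 z, hu h2 z, ← ha, ← hb, hzb]
    rw [show (uL + uR)/2 + (uR - uL)/2 * S (z/a) -
        ((uL + uR)/2 + (uR - uL)/2 * S (ρ * (z/a))) =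
        (uR - uL)/2 * (S (z/a) - S (ρ * (z/a))) by ring]
    rw [abs_mul, abs_div, abs_two]
  calc ∫ z : ℝ, |u h1 z - u h2 z|
      = ∫ z : ℝ, |uR - uL|/2 * |S (z/a) - S (ρ * (z/a))| := by
        exact integral_congr_ae (Filter.Eventually.of_forall hpt)
    _ = |uR - uL|/2 * ∫ z : ℝ, |S (z/a) - S (ρ * (z/a))| := by
        rw [integral_const_mul]
    _ = |uR - uL|/2 * (|a| • ∫ χ : ℝ, |S χ - S (ρ * χ)|) := by
        rw [← MeasureTheory.Measure.integral_comp_div (fun χ => |S χ - S (ρ * χ)|) a]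
    _ = |uR - uL| * a * ((1/2) * ∫ χ : ℝ, |S χ - S (χ * ρ)|) := by
        simp only [smul_eq_mul, abs_of_pos hapos]
        have : (fun χ : ℝ => |S χ - S (ρ * χ)|) = fun χ : ℝ => |S χ - S (χ * ρ)| := by
          funext χ; rw [mul_comm]
        rw [this]; ring
end

section
/- Under the same self-similar ansatz u_h(z) = C_1 + C_2 S(z/(κ h^p t_f)^{1/(p+1)}), if the mesh sizes are uniformly refined, h_2 = r h_1 and h_3 = r² h_1 with 0 < r < 1, then the ratio of successive L^1 differences satisfies ||u_{h_1} - u_{h_2}|| / ||u_{h_2} - u_{h_3}|| = (1/r)^{p/(p+1)} = (h_1/h_2)^{p/(p+1)}, provided ∫_ℝ |S(χ) - S(χ r^{-p/(p+1)})| dχ is finite and nonzero. -/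
open MeasureTheory Real

lemma scale_int (g : ℝ → ℝ) (a : ℝ) (ha : 0 < a) :
    (∫ z : ℝ, g (z / a)) = a * ∫ χ : ℝ, g χ := by
  rw [MeasureTheory.Measure.integral_comp_div g a, abs_of_pos ha, smul_eq_mul]

theorem stmt9 (S : ℝ → ℝ) (C1 C2 : ℝ) (hC2 : C2 ≠ 0)
    (κ tf p : ℝ) (hκ : 0 < κ) (htf : 0 < tf) (hp : 1 ≤ p)
    (u : ℝ → ℝ → ℝ)
    (hu : ∀ h z, u h z = C1 + C2 * S (z / (κ * h ^ p * tf) ^ (1/(p+1))))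
    (r h1 h2 h3 : ℝ) (hr0 : 0 < r) (hr1 : r < 1) (hh1 : 0 < h1)
    (hh2 : h2 = r * h1) (hh3 : h3 = r^2 * h1)
    (hint : Integrable (fun χ : ℝ => |S χ - S (χ * r ^ (-(p/(p+1))))|))
    (hne : (∫ χ : ℝ, |S χ - S (χ * r ^ (-(p/(p+1))))|) ≠ 0) :
    (∫ z : ℝ, |u h1 z - u h2 z|) / (∫ z : ℝ, |u h2 z - u h3 z|) = (1/r) ^ (p/(p+1)) ∧
    (1/r : ℝ) ^ (p/(p+1)) = (h1/h2) ^ (p/(p+1)) := by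
  set q : ℝ := p / (p + 1) with hq
  set a : ℝ → ℝ := fun h => (κ * h ^ p * tf) ^ (1/(p+1)) with haa
  have hrq : (0:ℝ) < r ^ q := Real.rpow_pos_of_pos hr0 q
  have hapos : ∀ h : ℝ, 0 < h → 0 < a h := fun h hh =>
    Real.rpow_pos_of_pos (by positivity) _
  have hstep : ∀ h : ℝ, 0 < h → a (r * h) = r ^ q * a h := by
    intro h hh
    have h1' : ((r * h) : ℝ) ^ p = r ^ p * h ^ p :=
      Real.mul_rpow hr0.le hh.le
    have h2' : κ * (r * h) ^ p * tf = r ^ p * (κ * h ^ p * tf) := by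
      rw [h1']; ring
    have h3' : (r ^ p * (κ * h ^ p * tf)) ^ (1/(p+1))
        = (r ^ p) ^ (1/(p+1)) * (κ * h ^ p * tf) ^ (1/(p+1)) :=
      Real.mul_rpow (Real.rpow_nonneg hr0.le _) (by positivity)
    have h4' : (r ^ p) ^ (1/(p+1)) = r ^ q := by
      rw [← Real.rpow_mul hr0.le, hq]; ring_nf
    simp only [haa]
    rw [h2', h3', h4']
  -- key integral computation
  have key : ∀ b : ℝ, 0 < b →
      (∫ z : ℝ, |C2 * S (z / b) - C2 * S (z / (r ^ q * b))|)
        = |C2| * (b * ∫ χ : ℝ, |S χ - S (χ * r ^ (-q))|) := by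
    intro b hb
    have hrw : ∀ z : ℝ, |C2 * S (z / b) - C2 * S (z / (r ^ q * b))|
        = |C2| * |S (z / b) - S ((z / b) * r ^ (-q))| := by
      intro z
      have : z / (r ^ q * b) = (z / b) * r ^ (-q) := by
        rw [div_mul_eq_div_div_swap, div_eq_mul_inv (z/b), ← Real.rpow_neg hr0.le]
      rw [this, ← mul_sub, abs_mul]
    calc (∫ z : ℝ, |C2 * S (z / b) - C2 * S (z / (r ^ q * b))|)
        = ∫ z : ℝ, |C2| * |S (z / b) - S ((z / b) * r ^ (-q))| := by
          exact integral_congr_ae (Filter.Eventually.of_forall hrw)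
      _ = |C2| * ∫ z : ℝ, |S (z / b) - S ((z / b) * r ^ (-q))| := by
          rw [integral_const_mul]
      _ = |C2| * (b * ∫ χ : ℝ, |S χ - S (χ * r ^ (-q))|) := by
          rw [scale_int (fun χ => |S χ - S (χ * r ^ (-q))|) b hb]
  have ha1 := hapos h1 hh1
  have hh2pos : 0 < h2 := by rw [hh2]; positivity
  have ha2 := hapos h2 hh2pos
  have ha2eq : a h2 = r ^ q * a h1 := by rw [hh2]; exact hstep h1 hh1
  have ha3eq : a h3 = r ^ q * a h2 := by
    have : h3 = r * h2 := by rw [hh3, hh2]; ring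
    rw [this]; exact hstep h2 hh2pos
  set I : ℝ := ∫ χ : ℝ, |S χ - S (χ * r ^ (-q))| with hI
  have e1 : (∫ z : ℝ, |u h1 z - u h2 z|) = |C2| * (a h1 * I) := by
    have : ∀ z, |u h1 z - u h2 z| = |C2 * S (z / a h1) - C2 * S (z / (r ^ q * a h1))| := by
      intro z
      rw [hu h1 z, hu h2 z]
      show |C1 + C2 * S (z / a h1) - (C1 + C2 * S (z / a h2))| = _
      rw [ha2eq]; congr 1; ring
    rw [integral_congr_ae (Filter.Eventually.of_forall this), key (a h1) ha1]
  have e2 : (∫ z : ℝ, |u h2 z - u h3 z|) = |C2| * (a h2 * I) := by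
    have : ∀ z, |u h2 z - u h3 z| = |C2 * S (z / a h2) - C2 * S (z / (r ^ q * a h2))| := by
      intro z
      rw [hu h2 z, hu h3 z]
      show |C1 + C2 * S (z / a h2) - (C1 + C2 * S (z / a h3))| = _
      rw [ha3eq]; congr 1; ring
    rw [integral_congr_ae (Filter.Eventually.of_forall this), key (a h2) ha2]
  constructor
  · rw [e1, e2, ha2eq]
    have hCabs : |C2| ≠ 0 := abs_ne_zero.mpr hC2
    have hIne : I ≠ 0 := hne
    rw [div_eq_iff (by
      apply mul_ne_zero hCabs
      exact mul_ne_zero (mul_ne_zero hrq.ne' ha1.ne') hIne)]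
    have : ((1:ℝ)/r) ^ q = (r ^ q)⁻¹ := by
      rw [one_div, Real.inv_rpow hr0.le]
    rw [this]
    field_simp
  · congr 1
    rw [hh2]
    field_simp
end

section
/- With the self-similar ansatz and uniform refinement h_2 = r h_1, h_3 = r² h_1 (0 < r < 1), the value σ = p/(p+1) solves the Richardson equation |h_1^σ - h_2^σ|/|h_2^σ - h_3^σ| = ||u_{h_1} - u_{h_2}||/||u_{h_2} - u_{h_3}||. -/
open MeasureTheory Real

lemma scale_int_s10 (f : ℝ → ℝ) (a : ℝ) :
    (∫ x : ℝ, f (x / a)) = |a| * ∫ y : ℝ, f y := by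
  simpa [smul_eq_mul] using MeasureTheory.Measure.integral_comp_div f a

theorem stmt10 (S : ℝ → ℝ) (C1 C2 : ℝ) (hC2 : C2 ≠ 0)
    (κ tf p : ℝ) (hκ : 0 < κ) (htf : 0 < tf) (hp : 1 ≤ p)
    (u : ℝ → ℝ → ℝ)
    (hu : ∀ h z, u h z = C1 + C2 * S (z / (κ * h ^ p * tf) ^ (1/(p+1))))
    (r h1 h2 h3 : ℝ) (hr0 : 0 < r) (hr1 : r < 1) (hh1 : 0 < h1)
    (hh2 : h2 = r * h1) (hh3 : h3 = r^2 * h1)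
    (hint : Integrable (fun χ : ℝ => |S χ - S (χ * r ^ (-(p/(p+1))))|))
    (hne : (∫ χ : ℝ, |S χ - S (χ * r ^ (-(p/(p+1))))|) ≠ 0) :
    |h1 ^ (p/(p+1)) - h2 ^ (p/(p+1))| / |h2 ^ (p/(p+1)) - h3 ^ (p/(p+1))| =
      (∫ z : ℝ, |u h1 z - u h2 z|) / (∫ z : ℝ, |u h2 z - u h3 z|) := by
  have hp1 : (0:ℝ) < p + 1 := by linarith
  set σ : ℝ := p / (p + 1) with hσdef
  have hσ : 0 < σ := div_pos (by linarith) hp1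
  set ρ : ℝ := r ^ (-σ) with hρdef
  have hρpos : 0 < ρ := Real.rpow_pos_of_pos hr0 _
  have hh2' : 0 < h2 := by rw [hh2]; positivity
  have hh3' : 0 < h3 := by rw [hh3]; positivity
  set a : ℝ → ℝ := fun h => (κ * h ^ p * tf) ^ (1/(p+1)) with hadef
  have ha_pos : ∀ h : ℝ, 0 < h → 0 < a h := fun h hh =>
    Real.rpow_pos_of_pos (by positivity) _
  have ha_scale : ∀ c h : ℝ, 0 < c → 0 < h → a (c * h) = c ^ σ * a h := by
    intro c h hc hh
    have hch : (c * h) ^ p = c ^ p * h ^ p := Real.mul_rpow hc.le hh.le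
    have h1' : κ * (c * h) ^ p * tf = c ^ p * (κ * h ^ p * tf) := by rw [hch]; ring
    have h2' : (0:ℝ) ≤ c ^ p := (Real.rpow_pos_of_pos hc p).le
    have h3' : (0:ℝ) ≤ κ * h ^ p * tf := by positivity
    show (κ * (c * h) ^ p * tf) ^ (1/(p+1)) = c ^ σ * (κ * h ^ p * tf) ^ (1/(p+1))
    rw [h1', Real.mul_rpow h2' h3', ← Real.rpow_mul hc.le, mul_one_div, hσdef]
  -- relations between the scales
  have hrσ : r ^ σ ≠ 0 := (Real.rpow_pos_of_pos hr0 σ).ne'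
  have hA2 : a h2 = r ^ σ * a h1 := by rw [hh2]; exact ha_scale r h1 hr0 hh1
  have hA3 : a h3 = r ^ σ * a h2 := by
    have : h3 = r * h2 := by rw [hh3, hh2]; ring
    rw [this]; exact ha_scale r h2 hr0 hh2'
  have hρinv : ρ = (r ^ σ)⁻¹ := by rw [hρdef, Real.rpow_neg hr0.le]
  have h12 : a h1 = ρ * a h2 := by
    rw [hA2, hρinv]; field_simp
  have h23 : a h2 = ρ * a h3 := by
    rw [hA3, hρinv]; field_simp
  -- the integrals
  set I : ℝ := ∫ χ : ℝ, |S χ - S (χ * ρ)| with hIdef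
  have main : ∀ hA hB : ℝ, 0 < a hA → a hA = ρ * a hB →
      (∫ z : ℝ, |u hA z - u hB z|) = |C2| * (a hA * I) := by
    intro hA hB hpos heq
    have hne0 : a hA ≠ 0 := hpos.ne'
    have step : ∀ z : ℝ, |u hA z - u hB z| = |C2| * |S (z / a hA) - S ((z / a hA) * ρ)| := by
      intro z
      have hzb : z / a hB = (z / a hA) * ρ := by
        rw [heq]
        have hρ0 : ρ ≠ 0 := hρpos.ne'
        have hB0 : a hB ≠ 0 := by
          intro h; rw [h, mul_zero] at heq; exact hne0 heq
        field_simp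
      rw [hu hA z, hu hB z]
      show |C1 + C2 * S (z / a hA) - (C1 + C2 * S (z / a hB))| = _
      rw [hzb]
      rw [show C1 + C2 * S (z / a hA) - (C1 + C2 * S ((z / a hA) * ρ)) =
          C2 * (S (z / a hA) - S ((z / a hA) * ρ)) by ring, abs_mul]
    calc (∫ z : ℝ, |u hA z - u hB z|)
        = ∫ z : ℝ, |C2| * |S (z / a hA) - S ((z / a hA) * ρ)| := by
          exact integral_congr_ae (Filter.Eventually.of_forall step)
      _ = |C2| * ∫ z : ℝ, |S (z / a hA) - S ((z / a hA) * ρ)| := integral_const_mul _ _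
      _ = |C2| * (|a hA| * I) := by
          rw [scale_int_s10 (fun χ => |S χ - S (χ * ρ)|) (a hA)]
      _ = |C2| * (a hA * I) := by rw [abs_of_pos hpos]
  have E1 : (∫ z : ℝ, |u h1 z - u h2 z|) = |C2| * (a h1 * I) :=
    main h1 h2 (ha_pos h1 hh1) h12
  have E2 : (∫ z : ℝ, |u h2 z - u h3 z|) = |C2| * (a h2 * I) :=
    main h2 h3 (ha_pos h2 hh2') h23
  -- compute both sides
  have hIne : I ≠ 0 := hne
  have hC2' : |C2| ≠ 0 := abs_ne_zero.mpr hC2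
  have hσ1 : h1 ^ σ > 0 := Real.rpow_pos_of_pos hh1 σ
  have hrlt : r ^ σ < 1 := Real.rpow_lt_one hr0.le hr1 hσ
  have hsub : (1:ℝ) - r ^ σ > 0 := by linarith
  have L2 : h2 ^ σ = r ^ σ * h1 ^ σ := by rw [hh2, Real.mul_rpow hr0.le hh1.le]
  have L3 : h3 ^ σ = r ^ σ * h2 ^ σ := by
    rw [show h3 = r * h2 by rw [hh3, hh2]; ring, Real.mul_rpow hr0.le hh2'.le]
  rw [E1, E2, h12, L3, L2]
  have haa : 0 < a h2 := ha_pos h2 hh2'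
  rw [show |h1 ^ σ - r ^ σ * h1 ^ σ| = h1 ^ σ * (1 - r ^ σ) by
    rw [abs_of_pos]; ring; nlinarith]
  rw [show |r ^ σ * h1 ^ σ - r ^ σ * (r ^ σ * h1 ^ σ)| = r ^ σ * (h1 ^ σ * (1 - r ^ σ)) by
    rw [abs_of_pos]; ring; nlinarith [mul_pos (mul_pos (Real.rpow_pos_of_pos hr0 σ) hσ1) hsub]]
  rw [hρinv]
  field_simp
end

section
/- Define I(ρ) = ∫_ℝ |erf(χ) - erf(ρχ)| dχ for ρ > 0. Then I(ρ) = (2/√π)|1 - 1/ρ|, and in particular for any ρ_1, ρ_2 > 1 the ratio I(ρ_1)/I(ρ_2) = (1 - 1/ρ_1)/(1 - 1/ρ_2). -/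
open MeasureTheory Real

/-!
Write `erf a - erf b` as `2/√π` times the integral of `exp (-s²)` between `b` and `a`. After
exchanging the order of integration (Tonelli), a point `s` lies between `ρχ` and `χ` exactly for
`χ` in an interval of length `|1 - 1/ρ| |s|`, so `I ρ = 2/√π · |1 - 1/ρ| · ∫ |s| exp (-s²) ds`,
and the last integral equals `1`.
-/

open Set
open scoped Interval

section Tonelli

variable {ρ : ℝ}

lemma setOf_mem_uIoc_mul_eq_Ico (hρ : 0 < ρ) (s : ℝ) :
    {χ : ℝ | s ∈ Ι (ρ * χ) χ} = Ico (min s (s / ρ)) (max s (s / ρ)) := by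
  ext χ
  simp only [mem_ofPred_eq, mem_uIoc, mem_Ico, min_le_iff, lt_max_iff,
    div_le_iff₀ hρ, lt_div_iff₀ hρ, mul_comm χ ρ]
  grind

lemma volume_setOf_mem_uIoc_mul (hρ : 0 < ρ) (s : ℝ) :
    volume {χ : ℝ | s ∈ Ι (ρ * χ) χ} = ENNReal.ofReal (|1 - 1 / ρ| * |s|) := by
  rw [setOf_mem_uIoc_mul_eq_Ico hρ, Real.volume_Ico, max_sub_min_eq_abs', ← abs_mul]
  ring_nf

lemma measurableSet_setOf_snd_mem_uIoc_mul_fst (ρ : ℝ) :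
    MeasurableSet {p : ℝ × ℝ | p.2 ∈ Ι (ρ * p.1) p.1} :=
  (measurableSet_lt (by fun_prop) measurable_snd).inter
    (measurableSet_le measurable_snd (by fun_prop))

lemma lintegral_setLIntegral_uIoc_mul {f : ℝ → ENNReal} (hf : AEMeasurable f) (hρ : 0 < ρ) :
    ∫⁻ χ, ∫⁻ s in Ι (ρ * χ) χ, f s = ∫⁻ s, ENNReal.ofReal (|1 - 1 / ρ| * |s|) * f s := by
  simp_rw [← lintegral_indicator measurableSet_uIoc]
  rw [lintegral_lintegral_swap]
  · congr 1 with s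
    rw [← volume_setOf_mem_uIoc_mul hρ, mul_comm, ← lintegral_indicator_const
      (setOf_mem_uIoc_mul_eq_Ico hρ s ▸ measurableSet_Ico)]
    rfl
  · exact hf.comp_snd.indicator (measurableSet_setOf_snd_mem_uIoc_mul_fst ρ)

/-- No integrability assumption is needed: both sides are `toReal` of the same lower integral,
with junk value `0` when it is infinite. -/
theorem integral_abs_primitive_sub_primitive_mul {g : ℝ → ℝ} (hg : LocallyIntegrable g)
    (hg_nonneg : 0 ≤ g) (hρ : 0 < ρ) :
    ∫ χ, |(∫ s in 0..χ, g s) - ∫ s in 0..ρ * χ, g s| = |1 - 1 / ρ| * ∫ s, |s| * g s := by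
  have hg_int : ∀ a b, IntegrableOn g (Ι a b) := fun a b =>
    (hg.integrableOn_isCompact isCompact_uIcc).mono_set uIoc_subset_uIcc
  have h_abs : ∀ χ, |(∫ s in 0..χ, g s) - ∫ s in 0..ρ * χ, g s| = ∫ s in Ι (ρ * χ) χ, g s := by
    intro χ
    rw [intervalIntegral.integral_interval_sub_left (intervalIntegrable_iff.mpr (hg_int _ _))
      (intervalIntegrable_iff.mpr (hg_int _ _)), intervalIntegral.abs_integral_eq_abs_integral_uIoc,
      abs_of_nonneg (setIntegral_nonneg_of_ae (.of_forall hg_nonneg))]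
  have h_cont : Continuous fun χ => ∫ s in 0..χ, g s :=
    intervalIntegral.continuous_primitive (fun a b => intervalIntegrable_iff.mpr (hg_int a b)) 0
  have h_meas : Continuous fun χ => |(∫ s in 0..χ, g s) - ∫ s in 0..ρ * χ, g s| :=
    (h_cont.sub (h_cont.comp (continuous_const_mul ρ))).abs
  rw [← integral_const_mul, integral_eq_lintegral_of_nonneg_ae (.of_forall fun _ => abs_nonneg _)
    h_meas.aestronglyMeasurable,
    integral_eq_lintegral_of_nonneg_ae
      (.of_forall fun s => mul_nonneg (abs_nonneg _) (mul_nonneg (abs_nonneg s) (hg_nonneg s)))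
      ((continuous_abs.aestronglyMeasurable.mul hg.aestronglyMeasurable).const_mul _)]
  congr 1
  calc ∫⁻ χ, ENNReal.ofReal |(∫ s in 0..χ, g s) - ∫ s in 0..ρ * χ, g s|
      = ∫⁻ χ, ∫⁻ s in Ι (ρ * χ) χ, ENNReal.ofReal (g s) := lintegral_congr fun χ => by
        rw [h_abs, ofReal_integral_eq_lintegral_ofReal (hg_int _ _) (.of_forall hg_nonneg)]
    _ = ∫⁻ s, ENNReal.ofReal (|1 - 1 / ρ| * |s|) * ENNReal.ofReal (g s) :=
        lintegral_setLIntegral_uIoc_mul hg.aestronglyMeasurable.aemeasurable.ennreal_ofReal hρ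
    _ = ∫⁻ s, ENNReal.ofReal (|1 - 1 / ρ| * (|s| * g s)) := lintegral_congr fun s => by
        rw [← ENNReal.ofReal_mul (by positivity), mul_assoc]

end Tonelli

lemma integral_Ioi_mul_exp_neg_sq : ∫ x in Ioi (0 : ℝ), x * exp (-x ^ 2) = 1 / 2 := by
  have h := integral_mul_cexp_neg_mul_sq (b := 1) (by simp)
  have h_real : ∀ r : ℝ, (r : ℂ) * Complex.exp (-1 * (r : ℂ) ^ 2) = ((r * exp (-r ^ 2) : ℝ) : ℂ) :=
    fun r => by push_cast; ring_nf
  rw [funext h_real, integral_complex_ofReal,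
    show ((2 : ℂ) * 1)⁻¹ = ((1 / 2 : ℝ) : ℂ) by push_cast; ring] at h
  exact_mod_cast h

lemma integral_abs_mul_exp_neg_sq : ∫ x : ℝ, |x| * exp (-x ^ 2) = 1 := by
  have h : ∀ x : ℝ, |x| * exp (-x ^ 2) = |x| * exp (-|x| ^ 2) := fun x => by rw [sq_abs]
  rw [integral_congr_ae (.of_forall h), integral_comp_abs (f := fun x => x * exp (-x ^ 2)),
    integral_Ioi_mul_exp_neg_sq]
  norm_num

theorem integral_abs_erf_sub_erf_mul {ρ : ℝ} (hρ : 0 < ρ) :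
    ∫ χ, |erf χ - erf (ρ * χ)| = 2 / √π * |1 - 1 / ρ| := by
  have h_exp : LocallyIntegrable fun s : ℝ => exp (-s ^ 2) :=
    (by fun_prop : Continuous fun s : ℝ => exp (-s ^ 2)).locallyIntegrable
  simp_rw [erf, ← mul_sub, abs_mul, abs_of_pos (by positivity : 0 < 2 / √π)]
  rw [integral_const_mul, integral_abs_primitive_sub_primitive_mul h_exp
    (fun s => (exp_pos _).le) hρ, integral_abs_mul_exp_neg_sq, mul_one]

theorem stmt14 (I : ℝ → ℝ) (hI : ∀ ρ : ℝ, I ρ = ∫ χ : ℝ, |erf χ - erf (ρ * χ)|) :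
    (∀ ρ : ℝ, 0 < ρ → I ρ = (2 / Real.sqrt Real.pi) * |1 - 1/ρ|) ∧
    (∀ ρ1 ρ2 : ℝ, 1 < ρ1 → 1 < ρ2 → I ρ1 / I ρ2 = (1 - 1/ρ1) / (1 - 1/ρ2)) := by
  have h_formula : ∀ ρ : ℝ, 0 < ρ → I ρ = (2 / Real.sqrt Real.pi) * |1 - 1/ρ| := fun ρ hρ => by
    rw [hI, integral_abs_erf_sub_erf_mul hρ]
  refine ⟨h_formula, fun ρ1 ρ2 h1 h2 => ?_⟩
  have h_abs : ∀ ρ : ℝ, 1 < ρ → |1 - 1 / ρ| = 1 - 1 / ρ := fun ρ hρ =>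
    abs_of_nonneg (sub_nonneg.mpr ((div_le_one (by linarith)).mpr hρ.le))
  rw [h_formula ρ1 (by linarith), h_formula ρ2 (by linarith), h_abs ρ1 h1, h_abs ρ2 h2]
  exact mul_div_mul_left _ _ (by positivity)
end
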